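/- arXiv:1209.3907 — 4 statements merged into one kernel-verified Lean document; each statement's English description precedes it below -/
import Mathlib

section
/- Fix α ≥ 1. For a skew-Hermitian n×n complex matrix a with eigenvalues √-1 λ₁, …, √-1 λₙ (λⱼ real), define ψ_α(a) = Σⱼ |λⱼ|^α. Then ψ_α is a convex function on the real vector space of skew-Hermitian matrices: ψ_α(t a + (1-t) b) ≤ t ψ_α(a) + (1-t) ψ_α(b) for all skew-Hermitian a, b and t ∈ [0,1]. -/
/-!
In an orthonormal eigenbasis `v` of the Hermitian matrix `C = s • A + t • B`, each eigenvalue of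
`C` is `s ⟪v j, A v j⟫ + t ⟪v j, B v j⟫`, so convexity of `f` bounds `∑ f (λⱼ C)` by the
corresponding combination of `∑ⱼ f ⟪v j, A v j⟫` and `∑ⱼ f ⟪v j, B v j⟫`. For any orthonormal
basis these diagonal entries arise from the eigenvalues of `A` through the doubly stochastic
matrix `‖⟪v j, e k⟫‖²` (`e` an eigenbasis of `A`), so Jensen's inequality gives Peierls' inequality
`∑ⱼ f ⟪v j, A v j⟫ ≤ ∑ₖ f (λₖ A)`. The theorem is the case `f = |·| ^ α` for the Hermitian
matrices `I • a` and `I • b`.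
-/

open Matrix Finset
open scoped InnerProductSpace

theorem convexOn_abs_rpow {p : ℝ} (hp : 1 ≤ p) : ConvexOn ℝ Set.univ fun x : ℝ => |x| ^ p := by
  have h_image : (fun x : ℝ => |x|) '' Set.univ = Set.Ici 0 :=
    Set.ext fun y => ⟨by rintro ⟨x, -, rfl⟩; exact abs_nonneg x,
      fun hy => ⟨y, trivial, abs_of_nonneg hy⟩⟩
  have h_abs : ConvexOn ℝ Set.univ fun x : ℝ => |x| := convexOn_univ_norm (E := ℝ)
  refine ConvexOn.comp (g := fun x : ℝ => x ^ p) (h_image ▸ convexOn_rpow hp) h_abs ?_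
  rw [h_image]
  exact fun x hx y _ hxy => Real.rpow_le_rpow hx hxy (zero_le_one.trans hp)

theorem ConvexOn.sum_map_mulVec_le {ι : Type*} [Fintype ι] [DecidableEq ι] {f : ℝ → ℝ}
    {s : Set ℝ} (hf : ConvexOn ℝ s f) {M : Matrix ι ι ℝ} (hM : M ∈ doublyStochastic ℝ ι)
    {x : ι → ℝ} (hx : ∀ i, x i ∈ s) : ∑ i, f ((M *ᵥ x) i) ≤ ∑ i, f (x i) := calc
  ∑ i, f ((M *ᵥ x) i) ≤ ∑ i, ∑ j, M i j * f (x j) :=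
    sum_le_sum fun i _ => hf.map_sum_le (fun j _ => nonneg_of_mem_doublyStochastic hM)
      (sum_row_of_mem_doublyStochastic hM i) fun j _ => hx j
  _ = ∑ j, f (x j) := by
    rw [sum_comm]
    simp_rw [← sum_mul, sum_col_of_mem_doublyStochastic hM, one_mul]

theorem OrthonormalBasis.of_norm_inner_sq_mem_doublyStochastic {ι 𝕜 E : Type*} [Fintype ι]
    [DecidableEq ι] [RCLike 𝕜] [NormedAddCommGroup E] [InnerProductSpace 𝕜 E]
    (b₁ b₂ : OrthonormalBasis ι 𝕜 E) :
    (of fun i j => ‖⟪b₁ i, b₂ j⟫_𝕜‖ ^ 2) ∈ doublyStochastic ℝ ι := by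
  refine mem_doublyStochastic_iff_sum.2 ⟨fun _ _ => sq_nonneg _, fun i => ?_, fun j => ?_⟩
  · simp [b₂.sum_sq_norm_inner_left, b₁.orthonormal.1 i]
  · simp [b₁.sum_sq_norm_inner_right, b₂.orthonormal.1 j]

namespace Matrix.IsHermitian

variable {ι 𝕜 : Type*} [Fintype ι] [DecidableEq ι] [RCLike 𝕜] {A : Matrix ι ι 𝕜}

theorem re_star_dotProduct_mulVec (hA : A.IsHermitian) (v : EuclideanSpace 𝕜 ι) :
    RCLike.re (star ⇑v ⬝ᵥ A *ᵥ ⇑v) =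
      ∑ k, ‖⟪v, hA.eigenvectorBasis k⟫_𝕜‖ ^ 2 * hA.eigenvalues k := by
  have h_eig (k : ι) : toEuclideanLin A (hA.eigenvectorBasis k) =
      hA.eigenvalues k • hA.eigenvectorBasis k :=
    WithLp.ofLp_injective 2 (hA.mulVec_eigenvectorBasis k)
  rw [dotProduct_comm]
  change RCLike.re ⟪v, toEuclideanLin A v⟫_𝕜 = _
  rw [← hA.eigenvectorBasis.sum_inner_mul_inner, map_sum]
  refine sum_congr rfl fun k _ => ?_
  rw [← isSymmetric_toEuclideanLin_iff.mpr hA, h_eig, inner_smul_left_eq_smul,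
    ← inner_conj_symm (hA.eigenvectorBasis k) v, mul_smul_comm, RCLike.mul_conj,
    RCLike.smul_re, ← RCLike.ofReal_pow, RCLike.ofReal_re, mul_comm]

theorem sum_map_re_star_dotProduct_mulVec_le (hA : A.IsHermitian) {f : ℝ → ℝ}
    (hf : ConvexOn ℝ Set.univ f) (v : OrthonormalBasis ι 𝕜 (EuclideanSpace 𝕜 ι)) :
    ∑ i, f (RCLike.re (star ⇑(v i) ⬝ᵥ A *ᵥ ⇑(v i))) ≤ ∑ k, f (hA.eigenvalues k) := by
  simp_rw [hA.re_star_dotProduct_mulVec]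
  exact hf.sum_map_mulVec_le (v.of_norm_inner_sq_mem_doublyStochastic hA.eigenvectorBasis)
    fun _ => trivial

end Matrix.IsHermitian

theorem ConvexOn.sum_map_eigenvalues_smul_add_smul_le {ι 𝕜 : Type*} [Fintype ι] [DecidableEq ι]
    [RCLike 𝕜] {f : ℝ → ℝ} (hf : ConvexOn ℝ Set.univ f) {A B C : Matrix ι ι 𝕜}
    (hA : A.IsHermitian) (hB : B.IsHermitian) (hC : C.IsHermitian) {s t : ℝ} (hs : 0 ≤ s)
    (ht : 0 ≤ t) (hst : s + t = 1) (hCAB : C = s • A + t • B) :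
    ∑ j, f (hC.eigenvalues j) ≤ s * ∑ j, f (hA.eigenvalues j) + t * ∑ j, f (hB.eigenvalues j) := by
  subst hCAB
  set v := hC.eigenvectorBasis
  set dA : ι → ℝ := fun j => RCLike.re (star ⇑(v j) ⬝ᵥ A *ᵥ ⇑(v j))
  set dB : ι → ℝ := fun j => RCLike.re (star ⇑(v j) ⬝ᵥ B *ᵥ ⇑(v j))
  have h_eig (j : ι) : hC.eigenvalues j = s * dA j + t * dB j := by
    simp [dA, dB, v, hC.eigenvalues_eq, add_mulVec, smul_mulVec, RCLike.smul_re]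
  calc ∑ j, f (hC.eigenvalues j)
      ≤ ∑ j, (s * f (dA j) + t * f (dB j)) :=
        sum_le_sum fun j _ => h_eig j ▸ hf.2 trivial trivial hs ht hst
    _ = s * ∑ j, f (dA j) + t * ∑ j, f (dB j) := by
        rw [sum_add_distrib, mul_sum, mul_sum]
    _ ≤ s * ∑ j, f (hA.eigenvalues j) + t * ∑ j, f (hB.eigenvalues j) := by
        gcongr s * ?_ + t * ?_
        · exact hA.sum_map_re_star_dotProduct_mulVec_le hf v
        · exact hB.sum_map_re_star_dotProduct_mulVec_le hf v

theorem stmt_3_general {n : ℕ} (α : ℝ) (hα : 1 ≤ α)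
    (a b : Matrix (Fin n) (Fin n) ℂ)
    (hA : (Complex.I • a).IsHermitian) (hB : (Complex.I • b).IsHermitian)
    (t : ℝ) (ht0 : 0 ≤ t) (ht1 : t ≤ 1)
    (hC : (Complex.I • (t • a + (1 - t) • b)).IsHermitian) :
    ∑ j, |hC.eigenvalues j| ^ α ≤
      t * ∑ j, |hA.eigenvalues j| ^ α + (1 - t) * ∑ j, |hB.eigenvalues j| ^ α :=
  (convexOn_abs_rpow hα).sum_map_eigenvalues_smul_add_smul_le hA hB hC ht0 (sub_nonneg.2 ht1)
    (add_sub_cancel _ _) (by rw [smul_add, smul_comm, smul_comm Complex.I])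

/-- ψ_α(a) = Σ |λ_j|^α is convex on skew-Hermitian matrices, where
√-1 λ_j are the eigenvalues of a (so λ_j are the eigenvalues of the
Hermitian matrix i·a). -/
theorem stmt_3 {n : ℕ} (α : ℝ) (hα : 1 ≤ α)
    (a b : Matrix (Fin n) (Fin n) ℂ)
    (ha : aᴴ = -a) (hb : bᴴ = -b)
    (hA : (Complex.I • a).IsHermitian) (hB : (Complex.I • b).IsHermitian)
    (t : ℝ) (ht0 : 0 ≤ t) (ht1 : t ≤ 1)
    (hC : (Complex.I • (t • a + (1 - t) • b)).IsHermitian) :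
    ∑ j, |hC.eigenvalues j| ^ α ≤
      t * ∑ j, |hA.eigenvalues j| ^ α + (1 - t) * ∑ j, |hB.eigenvalues j| ^ α :=
  stmt_3_general α hα a b hA hB t ht0 ht1 hC
end

section
/- Let μ₁ ≥ … ≥ μₙ ≥ 0 and λ₁ ≥ … ≥ λₙ > 0 be nonnegative reals. Suppose there exists k with μᵢ = λᵢ for i < k and μ_k > λ_k, and suppose Σ_{i=k}^n μᵢ^α = Σ_{i=k}^n λᵢ^α for all α ≥ 1. Then for every α > 0, (μ_k/λ_k)^α ≤ n; deriving a contradiction since μ_k/λ_k > 1 forces (μ_k/λ_k)^α → ∞ as α → ∞. Hence no such k exists. -/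
open Finset Filter

/-!
Since `λᵢ ≤ λ_k` on the tail `k ≤ i < n`, its power sum is at most `n λ_k ^ α`; the equal power
sum of `μ` contains the term `μ_k ^ α`, so `(μ_k / λ_k) ^ α ≤ n` for every `α ≥ 1`. A base
`μ_k / λ_k > 1` makes these powers unbounded.
-/

theorem Finset.rpow_le_card_mul_rpow_of_sum_rpow_eq {ι : Type*} {s : Finset ι} {f g : ι → ℝ}
    {i₀ : ι} {α : ℝ} (hα : 0 ≤ α) (hi₀ : i₀ ∈ s) (hf : ∀ i ∈ s, 0 ≤ f i)
    (hg : ∀ i ∈ s, 0 ≤ g i) (hg_le : ∀ i ∈ s, g i ≤ g i₀)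
    (hsum : ∑ i ∈ s, f i ^ α = ∑ i ∈ s, g i ^ α) :
    f i₀ ^ α ≤ #s * g i₀ ^ α :=
  calc f i₀ ^ α ≤ ∑ i ∈ s, f i ^ α :=
        single_le_sum (fun i hi => Real.rpow_nonneg (hf i hi) α) hi₀
    _ = ∑ i ∈ s, g i ^ α := hsum
    _ ≤ #s • g i₀ ^ α :=
        sum_le_card_nsmul _ _ _ fun i hi => Real.rpow_le_rpow (hg i hi) (hg_le i hi) hα
    _ = #s * g i₀ ^ α := nsmul_eq_mul _ _

theorem Finset.div_rpow_le_card_of_sum_rpow_eq {ι : Type*} {s : Finset ι} {f g : ι → ℝ}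
    {i₀ : ι} {α : ℝ} (hα : 0 ≤ α) (hi₀ : i₀ ∈ s) (hf : ∀ i ∈ s, 0 ≤ f i)
    (hg : ∀ i ∈ s, 0 < g i) (hg_le : ∀ i ∈ s, g i ≤ g i₀)
    (hsum : ∑ i ∈ s, f i ^ α = ∑ i ∈ s, g i ^ α) :
    (f i₀ / g i₀) ^ α ≤ #s := by
  have hg₀ := hg i₀ hi₀
  rw [Real.div_rpow (hf i₀ hi₀) hg₀.le, div_le_iff₀ (Real.rpow_pos_of_pos hg₀ α)]
  exact rpow_le_card_mul_rpow_of_sum_rpow_eq hα hi₀ hf (fun i hi => (hg i hi).le) hg_le hsum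

theorem Real.exists_one_le_and_lt_rpow {r : ℝ} (hr : 1 < r) (C : ℝ) : ∃ α ≥ (1 : ℝ), C < r ^ α :=
  (((tendsto_rpow_atTop_of_base_gt_one r hr).eventually_gt_atTop C).and
    (eventually_ge_atTop (1 : ℝ))).exists.imp fun _ h => ⟨h.2, h.1⟩

theorem stmt_8_general (n k : ℕ) (hk : k < n) (μ lam : ℕ → ℝ)
    (hlam : ∀ i j, i ≤ j → j < n → lam j ≤ lam i)
    (hμ0 : ∀ i < n, 0 ≤ μ i) (hlam0 : ∀ i < n, 0 < lam i)
    (hgt : lam k < μ k)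
    (hpow : ∀ α : ℝ, 1 ≤ α →
        ∑ i ∈ Ico k n, (μ i) ^ α = ∑ i ∈ Ico k n, (lam i) ^ α) :
    (∀ α : ℝ, 1 ≤ α → (μ k / lam k) ^ α ≤ (n : ℝ)) ∧ False := by
  have bound : ∀ α : ℝ, 1 ≤ α → (μ k / lam k) ^ α ≤ (n : ℝ) := fun α hα => by
    refine (div_rpow_le_card_of_sum_rpow_eq (zero_le_one.trans hα) (mem_Ico.2 ⟨le_rfl, hk⟩)
      (fun i hi => hμ0 i (mem_Ico.1 hi).2) (fun i hi => hlam0 i (mem_Ico.1 hi).2)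
      (fun i hi => hlam k i (mem_Ico.1 hi).1 (mem_Ico.1 hi).2) (hpow α hα)).trans ?_
    rw [Nat.card_Ico]
    exact_mod_cast Nat.sub_le n k
  obtain ⟨α, hα, hlt⟩ :=
    Real.exists_one_le_and_lt_rpow ((one_lt_div (hlam0 k hk)).2 hgt) n
  exact ⟨bound, (bound α hα).not_gt hlt⟩

/-- Key quantitative step: if μᵢ = λᵢ for i < k, μ_k > λ_k > 0, and the tail
power sums agree for all α ≥ 1, we get (μ_k/λ_k)^α ≤ n for all α > 0,
a contradiction. Hence no such k exists. -/
theorem stmt_8 (n k : ℕ) (hk : k < n) (μ lam : ℕ → ℝ)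
    (hμ : ∀ i j, i ≤ j → j < n → μ j ≤ μ i)
    (hlam : ∀ i j, i ≤ j → j < n → lam j ≤ lam i)
    (hμ0 : ∀ i < n, 0 ≤ μ i) (hlam0 : ∀ i < n, 0 < lam i)
    (heq : ∀ i < k, μ i = lam i) (hgt : lam k < μ k)
    (hpow : ∀ α : ℝ, 1 ≤ α →
        ∑ i ∈ Ico k n, (μ i) ^ α = ∑ i ∈ Ico k n, (lam i) ^ α) :
    (∀ α : ℝ, 1 ≤ α → (μ k / lam k) ^ α ≤ (n : ℝ)) ∧ False :=
  stmt_8_general n k hk μ lam hlam hμ0 hlam0 hgt hpow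
end

section
/- Let a be an n×n Hermitian matrix with eigenvalues λ₁ ≥ λ₂ ≥ … ≥ λₙ (with multiplicity), and let π be an n×n Hermitian matrix with π = π² of rank r. Then Tr(aπ) ≤ Σ_{i≤r} λᵢ. -/
/-!
Diagonalize `a = U D U*`. Then `Tr(aπ) = ∑ᵢ λᵢ qᵢᵢ` for the projection `q = U* π U`, whose
diagonal entries lie in `[0, 1]` (as do those of `1 - q`, being diagonals of positive semidefinite
matrices) and sum to `Tr q = r`. Among weights `tᵢ ∈ [0, 1]` with `∑ tᵢ = r`, a decreasing sequence
`λ` makes `∑ λᵢ tᵢ` largest when `t` is the indicator of the first `r` indices: comparing with a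
threshold `c` separating `λ` on and off those indices, `(λᵢ - c)(tᵢ - 1_{i<r}) ≤ 0` termwise.
-/

open Matrix Finset

theorem sum_mul_le_sum_of_threshold {ι : Type*} [Fintype ι] (μ t : ι → ℝ) (s : Finset ι) (c : ℝ)
    (hs : ∀ i ∈ s, c ≤ μ i) (hsc : ∀ i ∉ s, μ i ≤ c)
    (ht0 : ∀ i, 0 ≤ t i) (ht1 : ∀ i, t i ≤ 1) (hsum : ∑ i, t i = #s) :
    ∑ i, μ i * t i ≤ ∑ i ∈ s, μ i := by
  classical
  have hterm : ∀ i, μ i * (t i - if i ∈ s then 1 else 0) ≤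
      c * (t i - if i ∈ s then 1 else 0) := by
    intro i
    by_cases hi : i ∈ s
    · simp only [hi, if_true]
      exact mul_le_mul_of_nonpos_right (hs i hi) (by linarith [ht1 i])
    · simp only [hi, if_false, sub_zero]
      exact mul_le_mul_of_nonneg_right (hsc i hi) (ht0 i)
  have := Finset.sum_le_sum fun i (_ : i ∈ univ) => hterm i
  simp only [mul_sub, mul_ite, mul_one, mul_zero, sum_sub_distrib, ← mul_sum, sum_ite_mem,
    univ_inter, hsum, sum_const, nsmul_eq_mul] at this
  linarith

theorem Antitone.sum_mul_le_sum_filter_lt {n : ℕ} {μ t : Fin n → ℝ} (hμ : Antitone μ)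
    (ht0 : ∀ i, 0 ≤ t i) (ht1 : ∀ i, t i ≤ 1) {r : ℕ} (hsum : ∑ i, t i = r) :
    ∑ i, μ i * t i ≤ ∑ i ∈ univ.filter (fun i : Fin n => (i : ℕ) < r), μ i := by
  have hrn : r ≤ n := by
    have : (r : ℝ) ≤ n := by
      simpa [← hsum] using Finset.sum_le_sum fun i (_ : i ∈ univ) => ht1 i
    exact_mod_cast this
  rcases Nat.eq_zero_or_pos n with rfl | hn
  · simp
  -- the threshold is `μ` at index `r`, or at the last index when `r = n`
  set k : Fin n := ⟨min r (n - 1), by omega⟩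
  refine sum_mul_le_sum_of_threshold μ t _ (μ k) (fun i hi => hμ ?_) (fun i hi => hμ ?_)
    ht0 ht1 ?_
  · simp only [mem_filter, mem_univ, true_and] at hi
    simp only [Fin.le_def, k]
    omega
  · simp only [mem_filter, mem_univ, true_and, not_lt] at hi
    simp only [Fin.le_def, k]
    omega
  · rw [hsum, Fin.card_filter_val_lt, min_eq_right hrn]

namespace Matrix

variable {𝕜 : Type*} [RCLike 𝕜] {n : Type*} [Fintype n]

open scoped ComplexOrder MatrixOrder in
theorem IsStarProjection.diag_re_mem_Icc {P : Matrix n n 𝕜} (hP : IsStarProjection P) (i : n) :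
    RCLike.re (P i i) ∈ Set.Icc 0 1 := by
  classical
  have h0 : 0 ≤ P i i := (nonneg_iff_posSemidef.mp hP.nonneg).diag_nonneg
  have h1 : 0 ≤ (1 - P) i i := (nonneg_iff_posSemidef.mp hP.one_sub.nonneg).diag_nonneg
  rw [RCLike.nonneg_iff] at h0 h1
  simp only [sub_apply, one_apply_eq, map_sub, RCLike.one_re] at h1
  exact ⟨h0.1, by linarith [h1.1]⟩

variable [DecidableEq n]

theorem IsHermitian.trace_mul_eq_sum_eigenvalues_mul {A : Matrix n n 𝕜} (hA : A.IsHermitian)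
    (B : Matrix n n 𝕜) :
    trace (A * B) = ∑ i, (hA.eigenvalues i : 𝕜) *
      Unitary.conjStarAlgAut 𝕜 _ (star hA.eigenvectorUnitary) B i i := by
  conv_lhs => rw [hA.spectral_theorem]
  rw [Unitary.conjStarAlgAut_apply, Unitary.conjStarAlgAut_star_apply, mul_assoc, mul_assoc,
    trace_mul_comm, mul_assoc]
  simp only [trace, diag_apply, diagonal_mul, Function.comp_apply]

theorem trace_conjStarAlgAut (U : unitary (Matrix n n 𝕜)) (B : Matrix n n 𝕜) :
    trace (Unitary.conjStarAlgAut 𝕜 _ U B) = trace B := by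
  rw [Unitary.conjStarAlgAut_apply, trace_mul_cycle, Unitary.coe_star_mul_self, one_mul]

end Matrix

/-- Ky Fan maximum principle: for a Hermitian matrix a with decreasing
eigenvalues λ and a rank-r orthogonal projection π, Tr(aπ) ≤ Σ_{i<r} λᵢ. -/
theorem stmt_9 {n : ℕ} (a π : Matrix (Fin n) (Fin n) ℂ)
    (ha : a.IsHermitian) (hπ1 : πᴴ = π) (hπ2 : π * π = π)
    (r : ℕ) (hr : Matrix.trace π = (r : ℂ))
    (lam : Fin n → ℝ) (hmono : ∀ i j : Fin n, i ≤ j → lam j ≤ lam i)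
    (hspec : ∃ σ : Equiv.Perm (Fin n), lam = ha.eigenvalues ∘ σ) :
    (Matrix.trace (a * π)).re ≤ ∑ i ∈ univ.filter (fun i : Fin n => (i : ℕ) < r), lam i := by
  obtain ⟨σ, rfl⟩ := hspec
  set q := Unitary.conjStarAlgAut ℂ _ (star ha.eigenvectorUnitary) π
  have hq : IsStarProjection q := IsStarProjection.map ⟨hπ2, hπ1⟩ _
  have hq_trace : ∑ i, (q (σ i) (σ i)).re = r := by
    rw [Equiv.sum_comp σ fun i => (q i i).re, ← Complex.re_sum]
    exact congrArg Complex.re ((trace_conjStarAlgAut _ π).trans hr)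
  calc (trace (a * π)).re = ∑ i, ha.eigenvalues i * (q i i).re := by
        simp [ha.trace_mul_eq_sum_eigenvalues_mul, Complex.re_sum, q]
    _ = ∑ i, (ha.eigenvalues ∘ σ) i * (q (σ i) (σ i)).re :=
        (Equiv.sum_comp σ fun i => ha.eigenvalues i * (q i i).re).symm
    _ ≤ _ := Antitone.sum_mul_le_sum_filter_lt hmono (fun i => (hq.diag_re_mem_Icc _).1)
        (fun i => (hq.diag_re_mem_Icc _).2) hq_trace
end

section
/- Let a be an n×n Hermitian matrix with eigenvalues λ₁ ≥ … ≥ λₙ and let π be a rank-r orthogonal projection. Then Tr(aπ) ≥ Σ_{i>n-r} λᵢ, i.e. the trace is at least the sum of the r smallest eigenvalues. -/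
/-!
Conjugating by the eigenvector unitary `U` of `a` gives `Tr (a π) = ∑ λᵢ pᵢᵢ` with `p = U* π U`,
again an orthogonal projection. Since `0 ≤ p ≤ 1`, the weights `pᵢᵢ` lie in `[0, 1]`, and they sum
to `Tr p = r`. Among such weights, `∑ λᵢ tᵢ` is smallest when all the mass sits on the `r`
smallest eigenvalues.
-/

open Matrix Finset

open scoped MatrixOrder ComplexOrder

/-- Bathtub principle: `∑ (f i - c) * (t i - 1ₛ i)` is a sum of nonnegative terms. -/
theorem Finset.sum_le_sum_mul_of_sum_eq_card {ι : Type*} [Fintype ι] (s : Finset ι)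
    (f t : ι → ℝ) (c : ℝ) (hs : ∀ i ∈ s, f i ≤ c) (hsc : ∀ i ∉ s, c ≤ f i)
    (ht0 : ∀ i, 0 ≤ t i) (ht1 : ∀ i, t i ≤ 1) (hsum : ∑ i, t i = #s) :
    ∑ i ∈ s, f i ≤ ∑ i, f i * t i := by
  classical
  set e : ι → ℝ := fun i => if i ∈ s then 1 else 0
  have hterm : ∀ i, 0 ≤ (f i - c) * (t i - e i) := by
    intro i
    by_cases hi : i ∈ s
    · exact mul_nonneg_of_nonpos_of_nonpos (by linarith [hs i hi]) (by simp [e, hi, ht1 i])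
    · exact mul_nonneg (by linarith [hsc i hi]) (by simp [e, hi, ht0 i])
  have hfe : ∑ i, f i * e i = ∑ i ∈ s, f i := by simp [e, mul_ite]
  have hse : ∑ i, e i = #s := by simp [e]
  have hexpand : ∑ i, (f i - c) * (t i - e i)
      = ∑ i, f i * t i - ∑ i, f i * e i - c * (∑ i, t i - ∑ i, e i) := by
    simp only [sub_mul, mul_sub, Finset.sum_sub_distrib, Finset.mul_sum]
    ring
  have := Finset.sum_nonneg fun i (_ : i ∈ univ) => hterm i
  rw [hexpand, hfe, hse, hsum] at this
  linarith

theorem Fin.card_filter_sub_le_val {n r : ℕ} (hr : r ≤ n) :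
    #{i : Fin n | n - r ≤ (i : ℕ)} = r := by
  have h := card_filter_add_card_filter_not (s := (univ : Finset (Fin n)))
    (fun i => (i : ℕ) < n - r)
  simp only [not_lt, card_filter_val_lt, card_univ, Fintype.card_fin] at h
  omega

theorem Fin.sum_filter_le_sum_mul_of_antitone {n r : ℕ} {f t : Fin n → ℝ} (hf : Antitone f)
    (ht0 : ∀ i, 0 ≤ t i) (ht1 : ∀ i, t i ≤ 1) (hsum : ∑ i, t i = r) :
    ∑ i ∈ univ.filter (fun i : Fin n => n - r ≤ (i : ℕ)), f i ≤ ∑ i, f i * t i := by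
  obtain _ | m := n
  · simp
  have hr : r ≤ m + 1 := by
    have := Finset.sum_le_sum fun i (_ : i ∈ univ) => ht1 i
    simp only [hsum, sum_const, nsmul_eq_mul, mul_one] at this
    exact_mod_cast this
  -- The threshold sits at index `n - r`; the `min` keeps it in range when `r = 0`.
  refine sum_le_sum_mul_of_sum_eq_card _ f t (f ⟨min (m + 1 - r) m, by omega⟩)
    (fun i hi => hf ?_) (fun i hi => hf ?_) ht0 ht1 (by rw [hsum, card_filter_sub_le_val hr])
  all_goals simp only [mem_filter, mem_univ, true_and, Fin.le_def] at hi ⊢; omega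

namespace Matrix

variable {𝕜 ι : Type*} [RCLike 𝕜] [Fintype ι] [DecidableEq ι]

theorem _root_.IsStarProjection.re_diag_mem_Icc {p : Matrix ι ι 𝕜} (hp : IsStarProjection p)
    (i : ι) : RCLike.re (p i i) ∈ Set.Icc 0 1 := by
  have h0 := (RCLike.nonneg_iff.mp (hp.nonneg.posSemidef.diag_nonneg (i := i))).1
  have h1 := (RCLike.nonneg_iff.mp (hp.one_sub_nonneg.posSemidef.diag_nonneg (i := i))).1
  simp only [sub_apply, one_apply_eq, map_sub, RCLike.one_re] at h1
  exact ⟨h0, by linarith⟩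

theorem trace_conjStarAlgAut_s10 (u : unitary (Matrix ι ι 𝕜)) (b : Matrix ι ι 𝕜) :
    (Unitary.conjStarAlgAut 𝕜 _ u b).trace = b.trace := by
  rw [Unitary.conjStarAlgAut_apply, trace_mul_cycle, Unitary.coe_star_mul_self, one_mul]

theorem IsHermitian.trace_mul_eq_sum {a : Matrix ι ι 𝕜} (ha : a.IsHermitian) (b : Matrix ι ι 𝕜) :
    (a * b).trace = ∑ i, (ha.eigenvalues i : 𝕜) *
      Unitary.conjStarAlgAut 𝕜 _ (star ha.eigenvectorUnitary) b i i := by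
  set U : Matrix ι ι 𝕜 := (ha.eigenvectorUnitary : Matrix ι ι 𝕜)
  set D : Matrix ι ι 𝕜 := diagonal (RCLike.ofReal ∘ ha.eigenvalues)
  calc (a * b).trace = (U * (D * (star U * b))).trace := by
        rw [ha.spectral_theorem, Unitary.conjStarAlgAut_apply]; simp only [mul_assoc]; rfl
    _ = (D * (star U * b * U)).trace := by rw [trace_mul_comm]; simp only [mul_assoc]
    _ = _ := by simp [trace, D, U, diagonal_mul, Unitary.conjStarAlgAut_apply]

end Matrix

/-- Dual Ky Fan minimum principle: Tr(aπ) is at least the sum of the r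
smallest eigenvalues of the Hermitian matrix a. -/
theorem stmt_10 {n : ℕ} (a π : Matrix (Fin n) (Fin n) ℂ)
    (ha : a.IsHermitian) (hπ1 : πᴴ = π) (hπ2 : π * π = π)
    (r : ℕ) (hr : Matrix.trace π = (r : ℂ))
    (lam : Fin n → ℝ) (hmono : ∀ i j : Fin n, i ≤ j → lam j ≤ lam i)
    (hspec : ∃ σ : Equiv.Perm (Fin n), lam = ha.eigenvalues ∘ σ) :
    ∑ i ∈ univ.filter (fun i : Fin n => n - r ≤ (i : ℕ)), lam i ≤ (Matrix.trace (a * π)).re := by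
  obtain ⟨σ, rfl⟩ := hspec
  have hp := IsStarProjection.map ⟨hπ2, hπ1⟩
    (Unitary.conjStarAlgAut ℂ _ (star ha.eigenvectorUnitary))
  have htr := (trace_conjStarAlgAut_s10 (star ha.eigenvectorUnitary) π).trans hr
  rw [ha.trace_mul_eq_sum]
  generalize Unitary.conjStarAlgAut ℂ _ (star ha.eigenvectorUnitary) π = p at hp htr ⊢
  have hsum : ∑ i, (p (σ i) (σ i)).re = r := by
    rw [Equiv.sum_comp σ (fun i => (p i i).re), ← Complex.re_sum]
    exact congrArg Complex.re htr
  rw [Complex.re_sum, ← Equiv.sum_comp σ]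
  refine (Fin.sum_filter_le_sum_mul_of_antitone hmono (fun i => (hp.re_diag_mem_Icc (σ i)).1)
    (fun i => (hp.re_diag_mem_Icc (σ i)).2) hsum).trans_eq ?_
  exact Finset.sum_congr rfl fun i _ => (Complex.re_ofReal_mul _ _).symm
end
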